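/- Progress for FG: if ∅ ⊢ d : u, then either d is a value, or d ⟶ e for some e, or d panics (i.e., d = E[v.(t)] for some evaluation context E, value v, and type t with type(v) not implementing t). -/
import Mathlib


set_option linter.unusedVariables false

namespace FGPaper

/-! ## Featherweight Go (FG) -/

/-- FG type names: structure names or interface names. -/
inductive TypeName where
  | strct (s : String)
  | iface (s : String)
deriving DecidableEq

/-- FG method signature `(x̄ t̄) t`. -/
structure MethodSig where
  params : List (String × TypeName)
  ret : TypeName
deriving DecidableEq

/-- FG method specification `m M`. -/
structure MethodSpec where
  name : String
  sig : MethodSig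
deriving DecidableEq

/-- FG expressions. -/
inductive Expr where
  | var (x : String)
  | call (e : Expr) (m : String) (args : List Expr)
  | lit (t : TypeName) (args : List Expr)
  | select (e : Expr) (f : String)
  | assert (e : Expr) (t : TypeName)

/-- An FG program, presented abstractly by its sequence of declarations:
`declared` says a type name is declared, `fields` gives the fields of a
declared structure, `methods` gives the method specifications of a type
(declared methods for structures, interface members for interfaces), and
`body` gives, for a structure name and method name, the receiver variable,
parameters, return type, and body of the declared method. -/
structure FGProgram where
  declared : TypeName → Prop
  fields : String → Option (List (String × TypeName))
  methods : TypeName → Set MethodSpec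
  body : String → String → Option (String × List (String × TypeName) × TypeName × Expr)

/-- The FG implements relation `t <: u`: a structure type implements itself,
and `t <: t_I` whenever `methods(t) ⊇ methods(t_I)`. -/
inductive Imp (methods : TypeName → Set MethodSpec) : TypeName → TypeName → Prop
  | strct (s : String) : Imp methods (.strct s) (.strct s)
  | iface {t : TypeName} {i : String} :
      methods (.iface i) ⊆ methods t → Imp methods t (.iface i)

/-- FG values: structure literals all of whose fields are values. -/
inductive IsValue : Expr → Prop
  | lit {s : String} {args : List Expr} :
      (∀ e ∈ args, IsValue e) → IsValue (.lit (.strct s) args)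

/-- `type(v)` for a structure literal. -/
def typeOf : Expr → Option TypeName
  | .lit t _ => some t
  | _ => none

/-- Simultaneous substitution map `[x̄ := v̄]`. -/
def mkSubst (xs : List String) (vs : List Expr) : String → Option Expr :=
  fun x => (xs.zip vs).lookup x

/-- Apply a substitution of expressions for variables. -/
def substE (σ : String → Option Expr) : Expr → Expr
  | .var x => (σ x).getD (.var x)
  | .call e m args => .call (substE σ e) m (args.attach.map fun ⟨a, ha⟩ => substE σ a)
  | .lit t args => .lit t (args.attach.map fun ⟨a, ha⟩ => substE σ a)
  | .select e f => .select (substE σ e) f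
  | .assert e t => .assert (substE σ e) t

/-- Environment built from a list of variable/type bindings. -/
def mkCtx (l : List (String × TypeName)) : String → Option TypeName :=
  fun x => l.lookup x

/-- The FG typing judgment `Γ ⊢ e : t`. -/
inductive HasType (P : FGProgram) :
    (String → Option TypeName) → Expr → TypeName → Prop
  | var {Γ x t} : Γ x = some t → HasType P Γ (.var x) t
  | call {Γ e m args t params ret ts} :
      HasType P Γ e t →
      MethodSpec.mk m ⟨params, ret⟩ ∈ P.methods t →
      List.Forall₂ (HasType P Γ) args ts →
      List.Forall₂ (Imp P.methods) ts (params.map Prod.snd) →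
      HasType P Γ (.call e m args) ret
  | lit {Γ s args ts flds} :
      P.declared (.strct s) →
      P.fields s = some flds →
      List.Forall₂ (HasType P Γ) args ts →
      List.Forall₂ (Imp P.methods) ts (flds.map Prod.snd) →
      HasType P Γ (.lit (.strct s) args) (.strct s)
  | select {Γ e s flds f u} :
      HasType P Γ e (.strct s) →
      P.fields s = some flds →
      (f, u) ∈ flds →
      HasType P Γ (.select e f) u
  | assertI {Γ e i u} :
      P.declared (.iface i) →
      HasType P Γ e (.iface u) →
      HasType P Γ (.assert e (.iface i)) (.iface i)
  | assertS {Γ e s u} :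
      P.declared (.strct s) →
      HasType P Γ e (.iface u) →
      Imp P.methods (.strct s) (.iface u) →
      HasType P Γ (.assert e (.strct s)) (.strct s)
  | stupid {Γ e t s} :
      P.declared t →
      HasType P Γ e (.strct s) →
      HasType P Γ (.assert e t) t

/-- FG reduction `d ⟶ e` (with explicit congruence rules implementing the
left-to-right call-by-value evaluation contexts). -/
inductive Step (P : FGProgram) : Expr → Expr → Prop
  | field {s args flds f u v} {i : Nat} :
      (∀ e ∈ args, IsValue e) →
      P.fields s = some flds →
      flds[i]? = some (f, u) →
      args[i]? = some v →
      Step P (.select (.lit (.strct s) args) f) v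
  | call {s vargs m args x params ret e} :
      IsValue (.lit (.strct s) vargs) →
      (∀ a ∈ args, IsValue a) →
      P.body s m = some (x, params, ret, e) →
      Step P (.call (.lit (.strct s) vargs) m args)
        (substE (mkSubst (x :: params.map Prod.fst)
          (.lit (.strct s) vargs :: args)) e)
  | assert {v t tv} :
      IsValue v → typeOf v = some tv → Imp P.methods tv t →
      Step P (.assert v t) v
  | ctx_recv {e e' m args} :
      Step P e e' → Step P (.call e m args) (.call e' m args)
  | ctx_arg {v m vs a a' es} :
      IsValue v → (∀ e ∈ vs, IsValue e) → Step P a a' →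
      Step P (.call v m (vs ++ a :: es)) (.call v m (vs ++ a' :: es))
  | ctx_lit {t vs a a' es} :
      (∀ e ∈ vs, IsValue e) → Step P a a' →
      Step P (.lit t (vs ++ a :: es)) (.lit t (vs ++ a' :: es))
  | ctx_select {e e' f} : Step P e e' → Step P (.select e f) (.select e' f)
  | ctx_assert {e e' t} : Step P e e' → Step P (.assert e t) (.assert e' t)

/-- `d` panics: `d = E[v.(t)]` with `¬ type(v) <: t`. -/
inductive Panics (P : FGProgram) : Expr → Prop
  | cast {v t tv} :
      IsValue v → typeOf v = some tv → ¬ Imp P.methods tv t →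
      Panics P (.assert v t)
  | lit {t vs a es} :
      (∀ e ∈ vs, IsValue e) → Panics P a → Panics P (.lit t (vs ++ a :: es))
  | recv {e m args} : Panics P e → Panics P (.call e m args)
  | arg {v m vs a es} :
      IsValue v → (∀ e ∈ vs, IsValue e) → Panics P a →
      Panics P (.call v m (vs ++ a :: es))
  | select {e f} : Panics P e → Panics P (.select e f)
  | assert {e t} : Panics P e → Panics P (.assert e t)

/-- Well-formedness of an FG program. -/
structure FGProgram.Wf (P : FGProgram) : Prop where
  fields_declared : ∀ s flds, P.fields s = some flds → ∀ p ∈ flds, P.declared p.2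
  fields_exist : ∀ s, P.declared (.strct s) → ∃ flds, P.fields s = some flds
  methods_declared : ∀ t spec, spec ∈ P.methods t →
      P.declared spec.sig.ret ∧ ∀ p ∈ spec.sig.params, P.declared p.2
  methods_unique : ∀ t m sig₁ sig₂, MethodSpec.mk m sig₁ ∈ P.methods t →
      MethodSpec.mk m sig₂ ∈ P.methods t → sig₁ = sig₂
  body_methods : ∀ s m x params ret e, P.body s m = some (x, params, ret, e) →
      MethodSpec.mk m ⟨params, ret⟩ ∈ P.methods (.strct s)
  methods_body : ∀ s m sig, MethodSpec.mk m sig ∈ P.methods (.strct s) →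
      ∃ x e, P.body s m = some (x, sig.params, sig.ret, e)
  body_typed : ∀ s m x params ret e, P.body s m = some (x, params, ret, e) →
      ∃ t, HasType P (mkCtx ((x, TypeName.strct s) :: params)) e t ∧
        Imp P.methods t ret

end FGPaper

/-! ## Featherweight Generic Go (FGG) -/

namespace FGPaper

/-- FGG types: type parameters or named types `t(τ̄)`. -/
inductive GType where
  | tvar (a : String)
  | named (t : TypeName) (args : List GType)

/-- FGG method signature `(Ψ)(x̄ τ̄) τ`. -/
structure GMethodSig where
  tformals : List (String × GType)
  params : List (String × GType)
  ret : GType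

/-- FGG method specification. -/
structure GMethodSpec where
  name : String
  sig : GMethodSig

/-- FGG expressions. -/
inductive GExpr where
  | var (x : String)
  | call (e : GExpr) (m : String) (targs : List GType) (args : List GExpr)
  | lit (τ : GType) (args : List GExpr)
  | select (e : GExpr) (f : String)
  | assert (e : GExpr) (τ : GType)

/-- Type substitution map `(ᾱ := τ̄)`. -/
def mkTSubst (as : List String) (ts : List GType) : String → Option GType :=
  fun a => (as.zip ts).lookup a

/-- Apply a type substitution to a type. -/
def substT (η : String → Option GType) : GType → GType
  | .tvar a => (η a).getD (.tvar a)
  | .named t args => .named t (args.attach.map fun ⟨τ, hτ⟩ => substT η τ)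
decreasing_by
  all_goals simp_wf
  all_goals (have h := List.sizeOf_lt_of_mem hτ; omega)

/-- Apply a type substitution to all types occurring in an expression. -/
def substTE (η : String → Option GType) : GExpr → GExpr
  | .var x => .var x
  | .call e m targs args =>
      .call (substTE η e) m (targs.map (substT η))
        (args.attach.map fun ⟨a, ha⟩ => substTE η a)
  | .lit τ args => .lit (substT η τ) (args.attach.map fun ⟨a, ha⟩ => substTE η a)
  | .select e f => .select (substTE η e) f
  | .assert e τ => .assert (substTE η e) (substT η τ)
decreasing_by
  all_goals simp_wf
  all_goals try (have h := List.sizeOf_lt_of_mem ha; omega)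
  all_goals omega

/-- Substitution map of expressions for term variables. -/
def mkVSubst (xs : List String) (vs : List GExpr) : String → Option GExpr :=
  fun x => (xs.zip vs).lookup x

/-- Apply a substitution of expressions for term variables. -/
def substVE (σ : String → Option GExpr) : GExpr → GExpr
  | .var x => (σ x).getD (.var x)
  | .call e m targs args =>
      .call (substVE σ e) m targs (args.attach.map fun ⟨a, ha⟩ => substVE σ a)
  | .lit τ args => .lit τ (args.attach.map fun ⟨a, ha⟩ => substVE σ a)
  | .select e f => .select (substVE σ e) f
  | .assert e τ => .assert (substVE σ e) τ
decreasing_by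
  all_goals simp_wf
  all_goals try (have h := List.sizeOf_lt_of_mem ha; omega)
  all_goals omega

/-- An FGG program, presented abstractly by its declarations: `formals` gives
the type formals of a declared type name, `fields` gives the (instantiated)
fields of a structure instance, `methods` gives the (instantiated) method
specifications of a named type instance, and `body` gives the (instantiated)
receiver, parameters, return type and body of a method instance. -/
structure GProgram where
  formals : TypeName → Option (List (String × GType))
  fields : String → List GType → Option (List (String × GType))
  methods : TypeName → List GType → Set GMethodSpec
  body : String → List GType → String → List GType →
    Option (String × List (String × GType) × GType × GExpr)

/-- `bounds_Δ(τ)`: a type parameter goes to its declared bound, other types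
are unchanged. -/
def boundsOf (Δ : List (String × GType)) : GType → Option GType
  | .tvar a => Δ.lookup a
  | τ => some τ

/-- `methods_Δ(τ)`: methods of a named type, or of the bound of a type
parameter. -/
def methodsD (P : GProgram) (Δ : List (String × GType)) : GType → Set GMethodSpec
  | .tvar a =>
    match Δ.lookup a with
    | some (.named t args) => P.methods t args
    | _ => ∅
  | .named t args => P.methods t args

/-- The FGG implements relation `Δ ⊢ τ <: σ`. -/
inductive GImp (P : GProgram) (Δ : List (String × GType)) : GType → GType → Prop
  | param (a : String) : GImp P Δ (.tvar a) (.tvar a)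
  | strct (s : String) (args : List GType) :
      GImp P Δ (.named (.strct s) args) (.named (.strct s) args)
  | iface {τ : GType} {i : String} {args : List GType} :
      methodsD P Δ (.named (.iface i) args) ⊆ methodsD P Δ τ →
      GImp P Δ τ (.named (.iface i) args)

/-- Well-formed FGG types `Δ ⊢ τ ok`. -/
inductive GWfType (P : GProgram) (Δ : List (String × GType)) : GType → Prop
  | param {a τI} : Δ.lookup a = some τI → GWfType P Δ (.tvar a)
  | named {t args Φ} :
      (∀ τ ∈ args, GWfType P Δ τ) →
      P.formals t = some Φ →
      args.length = Φ.length →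
      List.Forall₂
        (fun τ bound => GImp P Δ τ (substT (mkTSubst (Φ.map Prod.fst) args) bound))
        args (Φ.map Prod.snd) →
      GWfType P Δ (.named t args)

/-- FGG values. -/
inductive GIsValue : GExpr → Prop
  | lit {s sargs args} :
      (∀ e ∈ args, GIsValue e) → GIsValue (.lit (.named (.strct s) sargs) args)

def gtypeOf : GExpr → Option GType
  | .lit τ _ => some τ
  | _ => none

/-- Interface-like types: type parameters and interface types. -/
def GType.isIfaceLike : GType → Prop
  | .tvar _ => True
  | .named (.iface _) _ => True
  | _ => False

def GType.isStructType : GType → Prop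
  | .named (.strct _) _ => True
  | _ => False

/-- Environment built from a list of bindings. -/
def mkCtxG (l : List (String × GType)) : String → Option GType :=
  fun x => l.lookup x

/-- The FGG typing judgment `Δ ; Γ ⊢ e : τ`. -/
inductive GHasType (P : GProgram) :
    List (String × GType) → (String → Option GType) → GExpr → GType → Prop
  | var {Δ Γ x τ} : Γ x = some τ → GHasType P Δ Γ (.var x) τ
  | call {Δ Γ e m targs args τr Ψ params ret τs} :
      GHasType P Δ Γ e τr →
      GMethodSpec.mk m ⟨Ψ, params, ret⟩ ∈ methodsD P Δ τr →
      targs.length = Ψ.length →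
      List.Forall₂
        (fun ta bd => GImp P Δ ta (substT (mkTSubst (Ψ.map Prod.fst) targs) bd))
        targs (Ψ.map Prod.snd) →
      List.Forall₂ (GHasType P Δ Γ) args τs →
      List.Forall₂
        (fun τ σ => GImp P Δ τ (substT (mkTSubst (Ψ.map Prod.fst) targs) σ))
        τs (params.map Prod.snd) →
      GHasType P Δ Γ (.call e m targs args)
        (substT (mkTSubst (Ψ.map Prod.fst) targs) ret)
  | lit {Δ Γ s sargs args τs flds} :
      GWfType P Δ (.named (.strct s) sargs) →
      P.fields s sargs = some flds →
      List.Forall₂ (GHasType P Δ Γ) args τs →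
      List.Forall₂ (GImp P Δ) τs (flds.map Prod.snd) →
      GHasType P Δ Γ (.lit (.named (.strct s) sargs) args) (.named (.strct s) sargs)
  | select {Δ Γ e s sargs flds f τ} :
      GHasType P Δ Γ e (.named (.strct s) sargs) →
      P.fields s sargs = some flds →
      (f, τ) ∈ flds →
      GHasType P Δ Γ (.select e f) τ
  | assertI {Δ Γ e τJ σJ} :
      GWfType P Δ τJ → τJ.isIfaceLike →
      GHasType P Δ Γ e σJ → σJ.isIfaceLike →
      GHasType P Δ Γ (.assert e τJ) τJ
  | assertS {Δ Γ e s sargs σJ b} :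
      GWfType P Δ (.named (.strct s) sargs) →
      GHasType P Δ Γ e σJ → σJ.isIfaceLike →
      boundsOf Δ σJ = some b →
      GImp P Δ (.named (.strct s) sargs) b →
      GHasType P Δ Γ (.assert e (.named (.strct s) sargs)) (.named (.strct s) sargs)
  | stupid {Δ Γ e τ σ} :
      GWfType P Δ τ →
      GHasType P Δ Γ e σ → σ.isStructType →
      GHasType P Δ Γ (.assert e τ) τ

/-- FGG reduction `d ⟶ e`. -/
inductive GStep (P : GProgram) : GExpr → GExpr → Prop
  | field {s sargs args flds f τ v} {i : Nat} :
      (∀ e ∈ args, GIsValue e) →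
      P.fields s sargs = some flds →
      flds[i]? = some (f, τ) →
      args[i]? = some v →
      GStep P (.select (.lit (.named (.strct s) sargs) args) f) v
  | call {s sargs vargs m targs args x params ret e} :
      GIsValue (.lit (.named (.strct s) sargs) vargs) →
      (∀ a ∈ args, GIsValue a) →
      P.body s sargs m targs = some (x, params, ret, e) →
      GStep P (.call (.lit (.named (.strct s) sargs) vargs) m targs args)
        (substVE (mkVSubst (x :: params.map Prod.fst)
          (.lit (.named (.strct s) sargs) vargs :: args)) e)
  | assert {v τ τv} :
      GIsValue v → gtypeOf v = some τv → GImp P [] τv τ →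
      GStep P (.assert v τ) v
  | ctx_recv {e e' m targs args} :
      GStep P e e' → GStep P (.call e m targs args) (.call e' m targs args)
  | ctx_arg {v m targs vs a a' es} :
      GIsValue v → (∀ e ∈ vs, GIsValue e) → GStep P a a' →
      GStep P (.call v m targs (vs ++ a :: es)) (.call v m targs (vs ++ a' :: es))
  | ctx_lit {τ vs a a' es} :
      (∀ e ∈ vs, GIsValue e) → GStep P a a' →
      GStep P (.lit τ (vs ++ a :: es)) (.lit τ (vs ++ a' :: es))
  | ctx_select {e e' f} : GStep P e e' → GStep P (.select e f) (.select e' f)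
  | ctx_assert {e e' τ} : GStep P e e' → GStep P (.assert e τ) (.assert e' τ)

/-- `d` panics in FGG: `d = E[v.(τ)]` with `¬ ∅ ⊢ type(v) <: τ`. -/
inductive GPanics (P : GProgram) : GExpr → Prop
  | cast {v τ τv} :
      GIsValue v → gtypeOf v = some τv → ¬ GImp P [] τv τ →
      GPanics P (.assert v τ)
  | lit {τ vs a es} :
      (∀ e ∈ vs, GIsValue e) → GPanics P a → GPanics P (.lit τ (vs ++ a :: es))
  | recv {e m targs args} : GPanics P e → GPanics P (.call e m targs args)
  | arg {v m targs vs a es} :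
      GIsValue v → (∀ e ∈ vs, GIsValue e) → GPanics P a →
      GPanics P (.call v m targs (vs ++ a :: es))
  | select {e f} : GPanics P e → GPanics P (.select e f)
  | assert {e τ} : GPanics P e → GPanics P (.assert e τ)

/-- Well-formedness of an FGG program. -/
structure GProgram.Wf (P : GProgram) : Prop where
  fields_wf : ∀ s sargs flds, P.fields s sargs = some flds →
      ∀ p ∈ flds, GWfType P [] p.2
  body_typed : ∀ s sargs m targs x params ret e,
      P.body s sargs m targs = some (x, params, ret, e) →
      ∃ τ, GHasType P [] (mkCtxG ((x, GType.named (.strct s) sargs) :: params)) e τ ∧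
        GImp P [] τ ret
  body_methods : ∀ s sargs m targs x params ret e,
      P.body s sargs m targs = some (x, params, ret, e) →
      ∃ Ψ params₀ ret₀,
        GMethodSpec.mk m ⟨Ψ, params₀, ret₀⟩ ∈ P.methods (.strct s) sargs ∧
        params = params₀.map
          (fun p => (p.1, substT (mkTSubst (Ψ.map Prod.fst) targs) p.2)) ∧
        ret = substT (mkTSubst (Ψ.map Prod.fst) targs) ret₀
  methods_body : ∀ s sargs m Ψ params ret,
      GMethodSpec.mk m ⟨Ψ, params, ret⟩ ∈ P.methods (.strct s) sargs →
      ∀ targs : List GType, targs.length = Ψ.length →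
      ∃ x e, P.body s sargs m targs =
        some (x,
          params.map (fun p => (p.1, substT (mkTSubst (Ψ.map Prod.fst) targs) p.2)),
          substT (mkTSubst (Ψ.map Prod.fst) targs) ret, e)

end FGPaper

/-! ## Instance sets and monomorphisation -/

namespace FGPaper

/-- Elements of instance sets: a type `τ`, or a method instance `τ.m(ψ)`. -/
inductive Instance where
  | ty (τ : GType)
  | meth (τ : GType) (m : String) (ψ : List GType)

/-- The instance-collection judgment `Δ ; Γ ⊢ e ▸ ω`. -/
inductive Collect (P : GProgram) (Δ : List (String × GType))
    (Γ : String → Option GType) : GExpr → Set Instance → Prop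
  | var {x} : Collect P Δ Γ (.var x) ∅
  | lit {τS args ωs} :
      List.Forall₂ (Collect P Δ Γ) args ωs →
      Collect P Δ Γ (.lit τS args)
        (insert (Instance.ty τS) {i | ∃ ω ∈ ωs, i ∈ ω})
  | select {e f ω} : Collect P Δ Γ e ω → Collect P Δ Γ (.select e f) ω
  | assert {e τ ω} :
      Collect P Δ Γ e ω → Collect P Δ Γ (.assert e τ) (insert (Instance.ty τ) ω)
  | call {e m ψ args τ ω ωs} :
      GHasType P Δ Γ e τ →
      Collect P Δ Γ e ω →
      List.Forall₂ (Collect P Δ Γ) args ωs →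
      Collect P Δ Γ (.call e m ψ args)
        (insert (Instance.ty τ) (insert (Instance.meth τ m ψ)
          (ω ∪ {i | ∃ ω' ∈ ωs, i ∈ ω'})))

def isIfaceGType : GType → Prop
  | .named (.iface _) _ => True
  | _ => False

/-- `F-ext`: field types of structure instances in `ω`. -/
def Fext (P : GProgram) (ω : Set Instance) : Set Instance :=
  {i | ∃ s sargs flds p, Instance.ty (.named (.strct s) sargs) ∈ ω ∧
        P.fields s sargs = some flds ∧ p ∈ flds ∧ i = .ty p.2}

/-- `M-ext`: types occurring in signatures of method instances in `ω`. -/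
def Mext (P : GProgram) (Δ : List (String × GType)) (ω : Set Instance) :
    Set Instance :=
  {i | ∃ τ m ψ Ψ params ret, Instance.meth τ m ψ ∈ ω ∧
        GMethodSpec.mk m ⟨Ψ, params, ret⟩ ∈ methodsD P Δ τ ∧
        ((∃ p ∈ params, i = .ty (substT (mkTSubst (Ψ.map Prod.fst) ψ) p.2)) ∨
          i = .ty (substT (mkTSubst (Ψ.map Prod.fst) ψ) ret))}

/-- `I-ext`: propagate method instances along subtyping between interfaces. -/
def Iext (P : GProgram) (Δ : List (String × GType)) (ω : Set Instance) :
    Set Instance :=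
  {i | ∃ τI τI' m ψ, Instance.meth τI m ψ ∈ ω ∧ isIfaceGType τI ∧
        Instance.ty τI' ∈ ω ∧ isIfaceGType τI' ∧ GImp P Δ τI' τI ∧
        i = .meth τI' m ψ}

/-- `S-ext`: instances required by bodies of implementations of called
methods. -/
def Sext (P : GProgram) (Δ : List (String × GType)) (ω : Set Instance) :
    Set Instance :=
  {i | ∃ τ m ψ s sargs x params ret e Ω',
        Instance.meth τ m ψ ∈ ω ∧
        Instance.ty (.named (.strct s) sargs) ∈ ω ∧
        GImp P Δ (.named (.strct s) sargs) τ ∧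
        P.body s sargs m ψ = some (x, params, ret, e) ∧
        Collect P Δ (mkCtxG ((x, GType.named (.strct s) sargs) :: params)) e Ω' ∧
        (i = .meth (.named (.strct s) sargs) m ψ ∨ i ∈ Ω')}

/-- The closure operator `G_Δ(ω)`. -/
def Gext (P : GProgram) (Δ : List (String × GType)) (ω : Set Instance) :
    Set Instance :=
  ω ∪ Fext P ω ∪ Mext P Δ ω ∪ Iext P Δ ω ∪ Sext P Δ ω

/-- The instance set of a program with main-body instance set `ω`:
`Ω = lim_{n→∞} G_∅ⁿ(ω)`. -/
def InstSet (P : GProgram) (ω : Set Instance) : Set Instance :=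
  ⋃ n : ℕ, (fun s => Gext P [] s)^[n] ω

/-- The FG method sets produced by monomorphising the instance set `Ω`:
for each type instance `τ ∈ Ω` with FG name `monoName τ`, a dummy method
(named by `hash`, with no parameters and return type `topName`) for every
FGG method of `τ`, together with the monomorphised instance of every method
instance `τ.m(ψ) ∈ Ω`. -/
def monoFGMethods (P : GProgram) (Ω : Set Instance) (monoName : GType → TypeName)
    (monoMeth : String → List GType → String) (hash : GMethodSpec → String)
    (topName : TypeName) : TypeName → Set MethodSpec := fun t =>
  {S | ∃ τ, Instance.ty τ ∈ Ω ∧ monoName τ = t ∧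
      ((∃ spec ∈ methodsD P [] τ, S = ⟨hash spec, ⟨[], topName⟩⟩) ∨
        (∃ m Ψ params ret ψ,
          GMethodSpec.mk m ⟨Ψ, params, ret⟩ ∈ methodsD P [] τ ∧
          Instance.meth τ m ψ ∈ Ω ∧
          S = ⟨monoMeth m ψ,
            ⟨params.map (fun p =>
                (p.1, monoName (substT (mkTSubst (Ψ.map Prod.fst) ψ) p.2))),
              monoName (substT (mkTSubst (Ψ.map Prod.fst) ψ) ret)⟩⟩))}

end FGPaper


namespace FGPaper

/-- Outcome of progress for a single expression. -/
def Prog (P : FGProgram) (d : Expr) : Prop :=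
  IsValue d ∨ (∃ e, Step P d e) ∨ Panics P d

lemma forall₂_mem_left {R : Expr → TypeName → Prop} :
    ∀ {args : List Expr} {ts : List TypeName}, List.Forall₂ R args ts →
      ∀ a ∈ args, ∃ t, R a t := by
  intro args ts h
  induction h with
  | nil => intro a ha; cases ha
  | cons h₁ _ ih =>
    intro a ha
    rcases List.mem_cons.1 ha with rfl | ha
    · exact ⟨_, h₁⟩
    · exact ih a ha

lemma list_split (P : FGProgram) {args : List Expr}
    (h : ∀ a ∈ args, Prog P a) :
    (∀ a ∈ args, IsValue a) ∨
      ∃ vs a es, args = vs ++ a :: es ∧ (∀ v ∈ vs, IsValue v) ∧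
        ((∃ e, Step P a e) ∨ Panics P a) := by
  induction args with
  | nil => left; intro a ha; cases ha
  | cons hd tl ih =>
    rcases h hd (by simp) with hv | hs
    · rcases ih (fun a ha => h a (by simp [ha])) with h1 | ⟨vs, a, es, rfl, hvs, hrest⟩
      · left; intro a ha
        rcases List.mem_cons.1 ha with rfl | ha
        exacts [hv, h1 a ha]
      · right
        refine ⟨hd :: vs, a, es, rfl, ?_, hrest⟩
        intro v hv'
        rcases List.mem_cons.1 hv' with rfl | h'
        exacts [hv, hvs v h']
    · right; exact ⟨[], hd, tl, rfl, by simp, hs⟩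

lemma value_struct {P : FGProgram} {Γ} {e : Expr} {t : TypeName}
    (hv : IsValue e) (ht : HasType P Γ e t) :
    ∃ s args, e = .lit (.strct s) args ∧ t = .strct s ∧ (∀ a ∈ args, IsValue a) := by
  cases hv with
  | @lit s args hargs =>
    cases ht with
    | lit _ _ _ _ => exact ⟨s, args, rfl, rfl, hargs⟩

lemma progress_aux (P : FGProgram) (hP : P.Wf) :
    ∀ n (d : Expr), sizeOf d ≤ n → ∀ u, HasType P (fun _ => none) d u → Prog P d := by
  intro n
  induction n with
  | zero => intro d hd; cases d <;> simp at hd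
  | succ n ih =>
    intro d hsz u hd
    cases hd with
    | var h => exact absurd h (by simp)
    | call he hm hargs himp =>
      rename_i e m args t params ts
      have hsze : sizeOf e ≤ n := by simp at hsz; omega
      have hszargs : ∀ a ∈ args, sizeOf a ≤ n := by
        intro a ha
        have := List.sizeOf_lt_of_mem ha
        simp at hsz; omega
      rcases ih e hsze t he with hv | ⟨e', hstep⟩ | hpan
      · obtain ⟨s, vargs, rfl, rfl, hvargs⟩ := value_struct hv he
        have hargsP : ∀ a ∈ args, Prog P a := by
          intro a ha
          obtain ⟨ta, hta⟩ := forall₂_mem_left hargs a ha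
          exact ih a (hszargs a ha) ta hta
        rcases list_split P hargsP with hall | ⟨vs, a, es, rfl, hvs, hsp⟩
        · obtain ⟨x, eb, hbody⟩ := hP.methods_body s m ⟨params, u⟩ hm
          exact Or.inr (Or.inl ⟨_, Step.call hv hall hbody⟩)
        · rcases hsp with ⟨a', hstep⟩ | hpan
          · exact Or.inr (Or.inl ⟨_, Step.ctx_arg hv hvs hstep⟩)
          · exact Or.inr (Or.inr (Panics.arg hv hvs hpan))
      · exact Or.inr (Or.inl ⟨_, Step.ctx_recv hstep⟩)
      · exact Or.inr (Or.inr (Panics.recv hpan))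
    | lit hdecl hflds hargs himp =>
      rename_i s args ts flds
      have hargsP : ∀ a ∈ args, Prog P a := by
        intro a ha
        obtain ⟨ta, hta⟩ := forall₂_mem_left hargs a ha
        have hle : sizeOf a ≤ n := by
          have := List.sizeOf_lt_of_mem ha
          simp at hsz; omega
        exact ih a hle ta hta
      rcases list_split P hargsP with hall | ⟨vs, a, es, heq, hvs, hsp⟩
      · exact Or.inl (IsValue.lit hall)
      · subst heq
        rcases hsp with ⟨a', hstep⟩ | hpan
        · exact Or.inr (Or.inl ⟨_, Step.ctx_lit hvs hstep⟩)
        · exact Or.inr (Or.inr (Panics.lit hvs hpan))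
    | select he hflds hmem =>
      rename_i e s flds f
      have hsze : sizeOf e ≤ n := by simp at hsz; omega
      rcases ih e hsze _ he with hv | ⟨e', hstep⟩ | hpan
      · obtain ⟨s', vargs, rfl, hteq, hvargs⟩ := value_struct hv he
        have hs : s' = s := by cases hteq; rfl
        subst hs
        obtain ⟨i, hi⟩ := List.mem_iff_getElem?.mp hmem
        have hilen : i < flds.length := (List.getElem?_eq_some_iff.mp hi).1
        cases he with
        | lit hdecl' hflds' hargs' himp' =>
          rw [hflds] at hflds'
          obtain rfl := Option.some.inj hflds'
          have hlen : vargs.length = flds.length := by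
            have h1 := hargs'.length_eq
            have h2 := himp'.length_eq
            simp at h2; omega
          have hargI : vargs[i]? = some (vargs[i]'(by omega)) :=
            List.getElem?_eq_getElem (by omega)
          exact Or.inr (Or.inl ⟨_, Step.field hvargs hflds hi hargI⟩)
      · exact Or.inr (Or.inl ⟨_, Step.ctx_select hstep⟩)
      · exact Or.inr (Or.inr (Panics.select hpan))
    | assertI hdecl he =>
      rename_i e i u'
      have hsze : sizeOf e ≤ n := by simp at hsz; omega
      rcases ih e hsze _ he with hv | ⟨e', hstep⟩ | hpan
      · obtain ⟨s, vargs, rfl, hteq, hvargs⟩ := value_struct hv he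
        cases hteq
      · exact Or.inr (Or.inl ⟨_, Step.ctx_assert hstep⟩)
      · exact Or.inr (Or.inr (Panics.assert hpan))
    | assertS hdecl he himp =>
      rename_i e s u'
      have hsze : sizeOf e ≤ n := by simp at hsz; omega
      rcases ih e hsze _ he with hv | ⟨e', hstep⟩ | hpan
      · obtain ⟨s', vargs, rfl, hteq, hvargs⟩ := value_struct hv he
        cases hteq
      · exact Or.inr (Or.inl ⟨_, Step.ctx_assert hstep⟩)
      · exact Or.inr (Or.inr (Panics.assert hpan))
    | stupid hdecl he =>
      rename_i e s
      have hsze : sizeOf e ≤ n := by simp at hsz; omega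
      rcases ih e hsze _ he with hv | ⟨e', hstep⟩ | hpan
      · obtain ⟨s', vargs, rfl, hteq, hvargs⟩ := value_struct hv he
        by_cases himp : Imp P.methods (.strct s') u
        · exact Or.inr (Or.inl ⟨_, Step.assert hv rfl himp⟩)
        · exact Or.inr (Or.inr (Panics.cast hv rfl himp))
      · exact Or.inr (Or.inl ⟨_, Step.ctx_assert hstep⟩)
      · exact Or.inr (Or.inr (Panics.assert hpan))

/-- Progress for FG. -/
theorem progress (P : FGProgram) (hP : P.Wf) (d : Expr) (u : TypeName)
    (hd : HasType P (fun _ => none) d u) :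
    IsValue d ∨ (∃ e, Step P d e) ∨ Panics P d :=
  progress_aux P hP (sizeOf d) d le_rfl u hd

end FGPaper
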